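/- arXiv:1806.08661 — 4 statements merged into one kernel-verified Lean document; each statement's English description precedes it below -/
import Mathlib

section
/- No deterministic classical strategy wins all six questions of the five-player cycle graph game: for every family of functions f_i : {0,1} → {0,1} (i ∈ ZMod 5), either the question Q_a is lost, i.e. f_1(1) + f_2(1) + f_3(1) + f_4(1) + f_5(1) ≢ 1 (mod 2), or some question Q_i is lost, i.e. f_{i-1}(0) + f_i(1) + f_{i+1}(0) ≢ 0 (mod 2) for some i ∈ ZMod 5. -/
/-- The five-player cycle graph game: no deterministic classical strategy
wins all six questions. -/
theorem fiveCycle_no_perfect_deterministic_strategy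
    (f : ZMod 5 → ZMod 2 → ZMod 2) :
    (∑ i : ZMod 5, f i 1) ≠ 1 ∨
      ∃ i : ZMod 5, f (i - 1) 0 + f i 1 + f (i + 1) 0 ≠ 0 := by
  by_contra h
  push_neg at h
  obtain ⟨h1, h2⟩ := h
  have e0 := h2 0
  have e1 := h2 1
  have e2 := h2 2
  have e3 := h2 3
  have e4 := h2 4
  rw [show ∑ i : ZMod 5, f i 1 = f 0 1 + f 1 1 + f 2 1 + f 3 1 + f 4 1 from
    Fin.sum_univ_five _] at h1
  norm_num [show (0:ZMod 5) - 1 = 4 from rfl, show (1:ZMod 5) - 1 = 0 from rfl,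
    show (2:ZMod 5) - 1 = 1 from rfl, show (3:ZMod 5) - 1 = 2 from rfl,
    show (4:ZMod 5) - 1 = 3 from rfl, show (4:ZMod 5) + 1 = 0 from by decide,
    show (3:ZMod 5) + 1 = 4 from rfl, show (2:ZMod 5) + 1 = 3 from rfl,
    show (1:ZMod 5) + 1 = 2 from rfl, show (0:ZMod 5) + 1 = 1 from rfl,
    show (-1:ZMod 5) = 4 from by decide, show (5:ZMod 5) = 0 from by decide] at e0 e1 e2 e3 e4
  rw [show ((-1):ZMod 5) = 4 by decide] at e0
  rw [show ((5):ZMod 5) = 0 by decide] at e4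
  have key : f 0 1 + f 1 1 + f 2 1 + f 3 1 + f 4 1 = 0 := by
    have c : ∀ x : ZMod 2, x + x = 0 := by decide
    linear_combination e0 + e1 + e2 + e3 + e4 - c (f 0 0) - c (f 1 0) - c (f 2 0)
      - c (f 3 0) - c (f 4 0)
  rw [key] at h1
  exact one_ne_zero h1.symm
end

section
/- Classical players with shared randomness cannot beat 5/6 in the five-player cycle graph game: for every finite set Λ, every probability distribution μ on Λ, and every family of functions f_i : {0,1} × Λ → {0,1} (i ∈ ZMod 5), the probability, over a uniformly chosen question among the six and λ drawn from μ, that the outputs a_i = f_i(x_i, λ) satisfy the winning predicate of the question asked, is at most 5/6. -/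
/-- Inputs of the six questions of the five-player cycle graph game:
`none` is the question `Q_a` (all inputs 1), `some i` is the question `Q_i`
(player `i` gets input 1, all others 0). -/
abbrev fiveCycleInput : Option (ZMod 5) → ZMod 5 → ZMod 2
  | none => fun _ => 1
  | some i => fun j => if j = i then 1 else 0

/-- The deterministic strategy `f` wins question `q` of the five-player
cycle graph game. -/
abbrev fiveCycleWins (f : ZMod 5 → ZMod 2 → ZMod 2) : Option (ZMod 5) → Prop
  | none => (∑ i : ZMod 5, f i (fiveCycleInput none i)) = 1
  | some i => f (i - 1) (fiveCycleInput (some i) (i - 1)) +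
      f i (fiveCycleInput (some i) i) +
      f (i + 1) (fiveCycleInput (some i) (i + 1)) = 0

lemma edge_eq (g : ZMod 5 → ZMod 2 → ZMod 2) (i : ZMod 5)
    (h : fiveCycleWins g (some i)) : g (i - 1) 0 + g i 1 + g (i + 1) 0 = 0 := by
  have hm : ∀ j : ZMod 5, j - 1 ≠ j := by decide
  have hp : ∀ j : ZMod 5, j + 1 ≠ j := by decide
  simpa only [fiveCycleWins, fiveCycleInput, if_neg (hm i), if_neg (hp i), if_pos rfl, if_true] using h

lemma not_all_wins (g : ZMod 5 → ZMod 2 → ZMod 2) : ∃ q, ¬ fiveCycleWins g q := by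
  by_contra h
  push_neg at h
  have ha : (∑ i : ZMod 5, g i 1) = 1 := h none
  have hs : ∑ i : ZMod 5, (g (i - 1) 0 + g i 1 + g (i + 1) 0) = 0 :=
    Finset.sum_eq_zero fun i _ => edge_eq g i (h (some i))
  rw [Finset.sum_add_distrib, Finset.sum_add_distrib] at hs
  have e1 : ∑ i : ZMod 5, g (i - 1) 0 = ∑ i : ZMod 5, g i 0 :=
    Fintype.sum_equiv (Equiv.subRight (1 : ZMod 5)) _ _ (fun i => rfl)
  have e2 : ∑ i : ZMod 5, g (i + 1) 0 = ∑ i : ZMod 5, g i 0 :=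
    Fintype.sum_equiv (Equiv.addRight (1 : ZMod 5)) _ _ (fun i => rfl)
  rw [e1, e2, ha] at hs
  have hSS : (∑ i : ZMod 5, g i 0) + (∑ i : ZMod 5, g i 0) = 0 := CharTwo.add_self_eq_zero _
  have : (1 : ZMod 2) = 0 := by linear_combination hs - hSS
  exact absurd this (by decide)

open Classical in
lemma sum_ind_le (g : ZMod 5 → ZMod 2 → ZMod 2) :
    ∑ q : Option (ZMod 5), (if fiveCycleWins g q then (1 : ℝ) else 0) ≤ 5 := by
  obtain ⟨q₀, hq⟩ := not_all_wins g
  rw [← Finset.add_sum_erase _ _ (Finset.mem_univ q₀), if_neg hq, zero_add]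
  calc ∑ q ∈ Finset.univ.erase q₀, (if fiveCycleWins g q then (1 : ℝ) else 0)
      ≤ ∑ q ∈ Finset.univ.erase q₀, 1 := by
        apply Finset.sum_le_sum; intro q _; split <;> norm_num
    _ = 5 := by
        rw [Finset.sum_const, Finset.card_erase_of_mem (Finset.mem_univ q₀)]
        simp

open Classical in
/-- Classical players with shared randomness cannot beat `5/6` in the
five-player cycle graph game. -/
theorem fiveCycle_shared_randomness_le
    (Λ : Type*) [Fintype Λ] (μ : Λ → ℝ)
    (hμ0 : ∀ l, 0 ≤ μ l) (hμ1 : ∑ l, μ l = 1)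
    (f : ZMod 5 → ZMod 2 → Λ → ZMod 2) :
    (1 / 6 : ℝ) * ∑ q : Option (ZMod 5), ∑ l : Λ,
        μ l * (if fiveCycleWins (fun i x => f i x l) q then 1 else 0) ≤ 5 / 6 := by
  have key : ∑ q : Option (ZMod 5), ∑ l : Λ,
      μ l * (if fiveCycleWins (fun i x => f i x l) q then (1:ℝ) else 0) ≤ 5 := by
    rw [Finset.sum_comm]
    calc ∑ l : Λ, ∑ q : Option (ZMod 5),
          μ l * (if fiveCycleWins (fun i x => f i x l) q then (1:ℝ) else 0)
        = ∑ l : Λ, μ l * ∑ q : Option (ZMod 5),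
            (if fiveCycleWins (fun i x => f i x l) q then (1:ℝ) else 0) := by
          exact Finset.sum_congr rfl fun l _ => (Finset.mul_sum _ _ _).symm
      _ ≤ ∑ l : Λ, μ l * 5 := by
          apply Finset.sum_le_sum; intro l _
          exact mul_le_mul_of_nonneg_left (sum_ind_le _) (hμ0 l)
      _ = 5 := by rw [← Finset.sum_mul, hμ1, one_mul]
  linarith
end

section
/- Every two-party binary non-signaling box is a convex combination of the 16 local deterministic boxes and the 8 PR-type boxes: for every two-party non-signaling box q there exist nonnegative coefficients summing to 1 expressing q as a convex combination of the boxes q_{f,g}(a,b|x,y) = [a = f(x)]·[b = g(y)] for f,g : {0,1} → {0,1}, and the boxes q_{α,β,γ}(a,b|x,y) = (1/2)·[a ⊕ b = (x ∧ y) ⊕ (α ∧ x) ⊕ (β ∧ y) ⊕ γ] for α,β,γ ∈ {0,1}. -/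
lemma zmodtwo : ∀ z : ZMod 2, z = 0 ∨ z = 1 := by decide

lemma zone : (1 : ZMod 2) ≠ 0 := by decide

lemma sumZ (h : ZMod 2 → ℝ) : ∑ z, h z = h 0 + h 1 := by
  rw [show (Finset.univ : Finset (ZMod 2)) = {0, 1} from by decide]
  simp [Finset.sum_insert, Finset.mem_singleton]

noncomputable def eF (u v : ZMod 2) : ZMod 2 → ZMod 2 := fun x => if x = 0 then u else v

lemma eF0 (u v : ZMod 2) : eF u v 0 = u := by simp [eF]
lemma eF1 (u v : ZMod 2) : eF u v 1 = v := by simp [eF, zone]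

noncomputable def eEquiv : ZMod 2 × ZMod 2 ≃ (ZMod 2 → ZMod 2) where
  toFun uv := eF uv.1 uv.2
  invFun f := (f 0, f 1)
  left_inv := by rintro ⟨u, v⟩; simp [eF]
  right_inv := by
    intro f; funext x
    rcases zmodtwo x with h | h <;> subst h <;> simp [eF]

lemma sumF (F : (ZMod 2 → ZMod 2) → ℝ) :
    ∑ f, F f = F (eF 0 0) + F (eF 0 1) + F (eF 1 0) + F (eF 1 1) := by
  rw [← Equiv.sum_comp eEquiv F, Fintype.sum_prod_type]
  simp only [sumZ]
  simp [eEquiv]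
  try ring

lemma sumPair (F : ((ZMod 2 → ZMod 2) × (ZMod 2 → ZMod 2)) → ℝ) :
    ∑ fg, F fg =
      F (eF 0 0, eF 0 0) + F (eF 0 0, eF 0 1) + F (eF 0 0, eF 1 0) + F (eF 0 0, eF 1 1) +
      (F (eF 0 1, eF 0 0) + F (eF 0 1, eF 0 1) + F (eF 0 1, eF 1 0) + F (eF 0 1, eF 1 1)) +
      (F (eF 1 0, eF 0 0) + F (eF 1 0, eF 0 1) + F (eF 1 0, eF 1 0) + F (eF 1 0, eF 1 1)) +
      (F (eF 1 1, eF 0 0) + F (eF 1 1, eF 0 1) + F (eF 1 1, eF 1 0) + F (eF 1 1, eF 1 1)) := by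
  rw [Fintype.sum_prod_type]
  simp only [sumF]
  try ring

lemma sumTriple (F : ZMod 2 × ZMod 2 × ZMod 2 → ℝ) :
    ∑ t, F t = F (0,0,0) + F (0,0,1) + F (0,1,0) + F (0,1,1) +
      F (1,0,0) + F (1,0,1) + F (1,1,0) + F (1,1,1) := by
  rw [Fintype.sum_prod_type]
  simp only [Fintype.sum_prod_type, sumZ]
  try ring

noncomputable def gdiv (d u v : ℝ) : ℝ := if d = 0 then 0 else u * v / d

lemma gdiv_nonneg {d u v : ℝ} (hd : 0 ≤ d) (hu : 0 ≤ u) (hv : 0 ≤ v) : 0 ≤ gdiv d u v := by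
  unfold gdiv; split
  · exact le_refl 0
  · exact div_nonneg (mul_nonneg hu hv) hd

lemma gdiv_comm (d u v : ℝ) : gdiv d u v = gdiv d v u := by unfold gdiv; rw [mul_comm]

lemma gdiv_row {d u : ℝ} (hu : 0 ≤ u) (hud : u ≤ d) (v v' : ℝ) (hvv : v + v' = d) :
    gdiv d u v + gdiv d u v' = u := by
  unfold gdiv; split
  · rename_i h
    have : u = 0 := le_antisymm (h ▸ hud) hu
    simp [this]
  · rename_i h
    have h2 : u * v + u * v' = u * d := by rw [← hvv]; ring
    rw [← add_div, h2, mul_div_assoc, div_self h, mul_one]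

set_option maxHeartbeats 2000000 in
set_option maxHeartbeats 2000000 in
lemma localDecomp (T : ℝ) (A B : ZMod 2 → ℝ) (p : ZMod 2 → ZMod 2 → ℝ)
    (h1 : ∀ x y, 0 ≤ p x y) (h2 : ∀ x y, p x y ≤ A x) (h3 : ∀ x y, p x y ≤ B y)
    (h4 : ∀ x y, A x + B y - T ≤ p x y)
    (ch1 : p 0 0 + p 0 1 + p 1 0 - p 1 1 ≤ A 0 + B 0)
    (ch2 : A 0 + B 0 - T ≤ p 0 0 + p 0 1 + p 1 0 - p 1 1)
    (ch3 : p 0 0 + p 0 1 - p 1 0 + p 1 1 ≤ A 0 + B 1)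
    (ch4 : A 0 + B 1 - T ≤ p 0 0 + p 0 1 - p 1 0 + p 1 1)
    (ch5 : p 0 0 - p 0 1 + p 1 0 + p 1 1 ≤ A 1 + B 0)
    (ch6 : A 1 + B 0 - T ≤ p 0 0 - p 0 1 + p 1 0 + p 1 1)
    (ch7 : -p 0 0 + p 0 1 + p 1 0 + p 1 1 ≤ A 1 + B 1)
    (ch8 : A 1 + B 1 - T ≤ -p 0 0 + p 0 1 + p 1 0 + p 1 1) :
    ∃ c : (ZMod 2 → ZMod 2) × (ZMod 2 → ZMod 2) → ℝ,
      (∀ fg, 0 ≤ c fg) ∧ (∑ fg, c fg) = T ∧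
      (∀ x y, ∑ fg, c fg * ((if fg.1 x = 0 then (1:ℝ) else 0) * (if fg.2 y = 0 then (1:ℝ) else 0)) = p x y) ∧
      (∀ x, ∑ fg, c fg * (if fg.1 x = 0 then (1:ℝ) else 0) = A x) ∧
      (∀ y, ∑ fg, c fg * (if fg.2 y = 0 then (1:ℝ) else 0) = B y) := by
  have i1 := h1 0 0; have i2 := h1 0 1; have i3 := h1 1 0; have i4 := h1 1 1
  have j1 := h2 0 0; have j2 := h2 0 1; have j3 := h2 1 0; have j4 := h2 1 1
  have k1 := h3 0 0; have k2 := h3 0 1; have k3 := h3 1 0; have k4 := h3 1 1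
  have l1 := h4 0 0; have l2 := h4 0 1; have l3 := h4 1 0; have l4 := h4 1 1
  set w : ℝ := 0 ⊔ (B 0 + B 1 - T) ⊔ (A 0 - p 0 0 - p 0 1 + B 0 + B 1 - T) ⊔
      (p 0 0 + p 0 1 - A 0) ⊔ (A 1 - p 1 0 - p 1 1 + B 0 + B 1 - T) ⊔
      (p 1 0 + p 1 1 - A 1) with hw
  have hwL1 : (0:ℝ) ≤ w := by simp only [hw, le_sup_iff, le_refl, true_or, or_true]
  have hwL2 : B 0 + B 1 - T ≤ w := by simp only [hw, le_sup_iff, le_refl, true_or, or_true]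
  have hwL3 : A 0 - p 0 0 - p 0 1 + B 0 + B 1 - T ≤ w := by
    simp only [hw, le_sup_iff, le_refl, true_or, or_true]
  have hwL4 : p 0 0 + p 0 1 - A 0 ≤ w := by
    simp only [hw, le_sup_iff, le_refl, true_or, or_true]
  have hwL5 : A 1 - p 1 0 - p 1 1 + B 0 + B 1 - T ≤ w := by
    simp only [hw, le_sup_iff, le_refl, true_or, or_true]
  have hwL6 : p 1 0 + p 1 1 - A 1 ≤ w := by
    simp only [hw, le_sup_iff, le_refl, true_or, or_true]
  have hwU1 : w ≤ B 0 := by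
    simp only [hw, sup_le_iff]
    refine ⟨⟨⟨⟨⟨?_, ?_⟩, ?_⟩, ?_⟩, ?_⟩, ?_⟩ <;> linarith
  have hwU2 : w ≤ B 1 := by
    simp only [hw, sup_le_iff]
    refine ⟨⟨⟨⟨⟨?_, ?_⟩, ?_⟩, ?_⟩, ?_⟩, ?_⟩ <;> linarith
  have hwU3 : w ≤ B 0 - p 0 0 + p 0 1 := by
    simp only [hw, sup_le_iff]
    refine ⟨⟨⟨⟨⟨?_, ?_⟩, ?_⟩, ?_⟩, ?_⟩, ?_⟩ <;> linarith
  have hwU4 : w ≤ B 1 + p 0 0 - p 0 1 := by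
    simp only [hw, sup_le_iff]
    refine ⟨⟨⟨⟨⟨?_, ?_⟩, ?_⟩, ?_⟩, ?_⟩, ?_⟩ <;> linarith
  have hwU5 : w ≤ B 0 - p 1 0 + p 1 1 := by
    simp only [hw, sup_le_iff]
    refine ⟨⟨⟨⟨⟨?_, ?_⟩, ?_⟩, ?_⟩, ?_⟩, ?_⟩ <;> linarith
  have hwU6 : w ≤ B 1 + p 1 0 - p 1 1 := by
    simp only [hw, sup_le_iff]
    refine ⟨⟨⟨⟨⟨?_, ?_⟩, ?_⟩, ?_⟩, ?_⟩, ?_⟩ <;> linarith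
  set s : ℝ := 0 ⊔ (p 0 0 - (B 0 - w)) ⊔ (p 0 1 - (B 1 - w)) ⊔ (p 0 0 + p 0 1 - A 0) with hs
  have hsL1 : (0:ℝ) ≤ s := by simp only [hs, le_sup_iff, le_refl, true_or, or_true]
  have hsL2 : p 0 0 - (B 0 - w) ≤ s := by simp only [hs, le_sup_iff, le_refl, true_or, or_true]
  have hsL3 : p 0 1 - (B 1 - w) ≤ s := by simp only [hs, le_sup_iff, le_refl, true_or, or_true]
  have hsL4 : p 0 0 + p 0 1 - A 0 ≤ s := by simp only [hs, le_sup_iff, le_refl, true_or, or_true]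
  have hsU1 : s ≤ w := by
    simp only [hs, sup_le_iff]
    refine ⟨⟨⟨?_, ?_⟩, ?_⟩, ?_⟩ <;> linarith
  have hsU2 : s ≤ p 0 0 := by
    simp only [hs, sup_le_iff]
    refine ⟨⟨⟨?_, ?_⟩, ?_⟩, ?_⟩ <;> linarith
  have hsU3 : s ≤ p 0 1 := by
    simp only [hs, sup_le_iff]
    refine ⟨⟨⟨?_, ?_⟩, ?_⟩, ?_⟩ <;> linarith
  have hsU4 : s ≤ (T - B 0 - B 1 + w) + (p 0 0 + p 0 1 - A 0) := by
    simp only [hs, sup_le_iff]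
    refine ⟨⟨⟨?_, ?_⟩, ?_⟩, ?_⟩ <;> linarith
  set r : ℝ := 0 ⊔ (p 1 0 - (B 0 - w)) ⊔ (p 1 1 - (B 1 - w)) ⊔ (p 1 0 + p 1 1 - A 1) with hr
  have hrL1 : (0:ℝ) ≤ r := by simp only [hr, le_sup_iff, le_refl, true_or, or_true]
  have hrL2 : p 1 0 - (B 0 - w) ≤ r := by simp only [hr, le_sup_iff, le_refl, true_or, or_true]
  have hrL3 : p 1 1 - (B 1 - w) ≤ r := by simp only [hr, le_sup_iff, le_refl, true_or, or_true]
  have hrL4 : p 1 0 + p 1 1 - A 1 ≤ r := by simp only [hr, le_sup_iff, le_refl, true_or, or_true]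
  have hrU1 : r ≤ w := by
    simp only [hr, sup_le_iff]
    refine ⟨⟨⟨?_, ?_⟩, ?_⟩, ?_⟩ <;> linarith
  have hrU2 : r ≤ p 1 0 := by
    simp only [hr, sup_le_iff]
    refine ⟨⟨⟨?_, ?_⟩, ?_⟩, ?_⟩ <;> linarith
  have hrU3 : r ≤ p 1 1 := by
    simp only [hr, sup_le_iff]
    refine ⟨⟨⟨?_, ?_⟩, ?_⟩, ?_⟩ <;> linarith
  have hrU4 : r ≤ (T - B 0 - B 1 + w) + (p 1 0 + p 1 1 - A 1) := by
    simp only [hr, sup_le_iff]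
    refine ⟨⟨⟨?_, ?_⟩, ?_⟩, ?_⟩ <;> linarith
  set lam : ZMod 2 → ZMod 2 → ℝ := fun k l =>
    if k = 0 then (if l = 0 then w else B 0 - w) else (if l = 0 then B 1 - w else T - B 0 - B 1 + w)
    with hlam
  set m0 : ZMod 2 → ZMod 2 → ℝ := fun k l =>
    if k = 0 then (if l = 0 then s else p 0 0 - s) else (if l = 0 then p 0 1 - s else A 0 - p 0 0 - p 0 1 + s)
    with hm0
  set m1 : ZMod 2 → ZMod 2 → ℝ := fun k l =>
    if k = 0 then (if l = 0 then r else p 1 0 - r) else (if l = 0 then p 1 1 - r else A 1 - p 1 0 - p 1 1 + r)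
    with hm1
  have hlampos : ∀ k l, 0 ≤ lam k l := by
    intro k l
    rcases zmodtwo k with rfl | rfl <;> rcases zmodtwo l with rfl | rfl <;>
      simp [hlam, zone] <;> linarith
  have hm0b : ∀ k l, 0 ≤ m0 k l ∧ m0 k l ≤ lam k l := by
    intro k l
    rcases zmodtwo k with rfl | rfl <;> rcases zmodtwo l with rfl | rfl <;>
      simp [hlam, hm0, zone] <;> constructor <;> linarith
  have hm1b : ∀ k l, 0 ≤ m1 k l ∧ m1 k l ≤ lam k l := by
    intro k l
    rcases zmodtwo k with rfl | rfl <;> rcases zmodtwo l with rfl | rfl <;>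
      simp [hlam, hm1, zone] <;> constructor <;> linarith
  set MA : ZMod 2 → ZMod 2 → ZMod 2 → ℝ := fun i k l => if i = 0 then m0 k l else lam k l - m0 k l
    with hMA
  set MB : ZMod 2 → ZMod 2 → ZMod 2 → ℝ := fun j k l => if j = 0 then m1 k l else lam k l - m1 k l
    with hMB
  have hMAb : ∀ i k l, 0 ≤ MA i k l ∧ MA i k l ≤ lam k l := by
    intro i k l
    rcases zmodtwo i with rfl | rfl <;> simp [hMA, zone] <;>
      exact ⟨by linarith [(hm0b k l).1, (hm0b k l).2], by linarith [(hm0b k l).1, (hm0b k l).2]⟩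
  have hMBb : ∀ j k l, 0 ≤ MB j k l ∧ MB j k l ≤ lam k l := by
    intro j k l
    rcases zmodtwo j with rfl | rfl <;> simp [hMB, zone] <;>
      exact ⟨by linarith [(hm1b k l).1, (hm1b k l).2], by linarith [(hm1b k l).1, (hm1b k l).2]⟩
  have hMAsum : ∀ k l, MA 0 k l + MA 1 k l = lam k l := by
    intro k l; simp [hMA, zone]
  have hMBsum : ∀ k l, MB 0 k l + MB 1 k l = lam k l := by
    intro k l; simp [hMB, zone]
  have HB : ∀ i k l, gdiv (lam k l) (MA i k l) (MB 0 k l) + gdiv (lam k l) (MA i k l) (MB 1 k l)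
      = MA i k l := fun i k l =>
    gdiv_row (hMAb i k l).1 (hMAb i k l).2 _ _ (hMBsum k l)
  have HA : ∀ j k l, gdiv (lam k l) (MA 0 k l) (MB j k l) + gdiv (lam k l) (MA 1 k l) (MB j k l)
      = MB j k l := by
    intro j k l
    rw [gdiv_comm (lam k l) (MA 0 k l), gdiv_comm (lam k l) (MA 1 k l)]
    exact gdiv_row (hMBb j k l).1 (hMBb j k l).2 _ _ (hMAsum k l)
  -- cell values
  have hMA0 : ∀ k l, MA 0 k l = m0 k l := by intro k l; simp [hMA]
  have hMB0 : ∀ k l, MB 0 k l = m1 k l := by intro k l; simp [hMB]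
  have hm0r0 : m0 0 0 + m0 0 1 = p 0 0 := by simp [hm0, zone]
  have hm0r1 : m0 1 0 + m0 1 1 = A 0 - p 0 0 := by simp [hm0, zone]; try ring
  have hm0c0 : m0 0 0 + m0 1 0 = p 0 1 := by simp [hm0, zone]
  have hm1r0 : m1 0 0 + m1 0 1 = p 1 0 := by simp [hm1, zone]
  have hm1r1 : m1 1 0 + m1 1 1 = A 1 - p 1 0 := by simp [hm1, zone]; try ring
  have hm1c0 : m1 0 0 + m1 1 0 = p 1 1 := by simp [hm1, zone]
  have hlam00 : lam 0 0 = w := by simp [hlam]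
  have hlam01 : lam 0 1 = B 0 - w := by simp [hlam, zone]
  have hlam10 : lam 1 0 = B 1 - w := by simp [hlam, zone]
  have hlam11 : lam 1 1 = T - B 0 - B 1 + w := by simp [hlam, zone]
  refine ⟨fun fg => gdiv (lam (fg.2 0) (fg.2 1)) (MA (fg.1 0) (fg.2 0) (fg.2 1))
      (MB (fg.1 1) (fg.2 0) (fg.2 1)), ?_, ?_, ?_, ?_, ?_⟩
  · intro fg
    exact gdiv_nonneg (hlampos _ _) (hMAb _ _ _).1 (hMBb _ _ _).1
  · rw [sumPair]
    simp only [eF0, eF1]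
    linarith [HB 0 0 0, HB 0 0 1, HB 0 1 0, HB 0 1 1, HB 1 0 0, HB 1 0 1, HB 1 1 0, HB 1 1 1,
      hMAsum 0 0, hMAsum 0 1, hMAsum 1 0, hMAsum 1 1, hlam00, hlam01, hlam10, hlam11]
  · intro x y
    rcases zmodtwo x with rfl | rfl <;> rcases zmodtwo y with rfl | rfl <;>
      rw [sumPair] <;> simp [eF0, eF1, zone]
    · linarith [HB 0 0 0, HB 0 0 1, hMA0 0 0, hMA0 0 1, hm0r0]
    · linarith [HB 0 0 0, HB 0 1 0, hMA0 0 0, hMA0 1 0, hm0c0]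
    · linarith [HA 0 0 0, HA 0 0 1, hMB0 0 0, hMB0 0 1, hm1r0]
    · linarith [HA 0 0 0, HA 0 1 0, hMB0 0 0, hMB0 1 0, hm1c0]
  · intro x
    rcases zmodtwo x with rfl | rfl <;>
      rw [sumPair] <;> simp [eF0, eF1, zone]
    · have e1 : m0 0 0 + m0 0 1 + m0 1 0 + m0 1 1 = A 0 := by simp [hm0, zone]; try ring
      linarith [HB 0 0 0, HB 0 0 1, HB 0 1 0, HB 0 1 1, hMA0 0 0, hMA0 0 1, hMA0 1 0, hMA0 1 1, e1]
    · have e1 : m1 0 0 + m1 0 1 + m1 1 0 + m1 1 1 = A 1 := by simp [hm1, zone]; try ring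
      linarith [HA 0 0 0, HA 0 0 1, HA 0 1 0, HA 0 1 1, hMB0 0 0, hMB0 0 1, hMB0 1 0, hMB0 1 1, e1]
  · intro y
    rcases zmodtwo y with rfl | rfl <;>
      rw [sumPair] <;> simp [eF0, eF1, zone]
    · linarith [HB 0 0 0, HB 0 0 1, HB 1 0 0, HB 1 0 1, hMAsum 0 0, hMAsum 0 1, hlam00, hlam01]
    · linarith [HB 0 0 0, HB 0 1 0, HB 1 0 0, HB 1 1 0, hMAsum 0 0, hMAsum 1 0, hlam00, hlam10]


lemma zone' : (0 : ZMod 2) ≠ 1 := by decide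
lemma ztwo : (1 : ZMod 2) + 1 = 0 := by decide



/-- `IsNSBox q` : `q a b x y` is the probability of outputs `(a,b)` given inputs
`(x,y)` of a two-party binary non-signaling box. -/
def IsNSBox (q : ZMod 2 → ZMod 2 → ZMod 2 → ZMod 2 → ℝ) : Prop :=
  (∀ a b x y, 0 ≤ q a b x y) ∧
  (∀ x y, ∑ a : ZMod 2, ∑ b : ZMod 2, q a b x y = 1) ∧
  (∀ a x y y', ∑ b : ZMod 2, q a b x y = ∑ b : ZMod 2, q a b x y') ∧
  (∀ b x x' y, ∑ a : ZMod 2, q a b x y = ∑ a : ZMod 2, q a b x' y)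

/-- The local deterministic box given by response functions `f` and `g`. -/
def detBox (f g : ZMod 2 → ZMod 2) (a b x y : ZMod 2) : ℝ :=
  if a = f x ∧ b = g y then 1 else 0

/-- The PR-type box with parameters `α β γ`. -/
noncomputable def prBox (α β γ : ZMod 2) (a b x y : ZMod 2) : ℝ :=
  if a + b = x * y + α * x + β * y + γ then 1 / 2 else 0


lemma pr_nonneg (c1 c2 c3 a b x y : ZMod 2) : 0 ≤ prBox c1 c2 c3 a b x y := by
  unfold prBox; split <;> norm_num

lemma prP1 (c1 c2 c3 x y : ZMod 2) :
    prBox c1 c2 c3 0 0 x y + prBox c1 c2 c3 0 1 x y = 1/2 := by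
  unfold prBox
  rcases zmodtwo (x * y + c1 * x + c2 * y + c3) with h | h <;> rw [h] <;>
    simp [zone, zone'] <;> norm_num
lemma prP2 (c1 c2 c3 x y : ZMod 2) :
    prBox c1 c2 c3 0 0 x y + prBox c1 c2 c3 1 0 x y = 1/2 := by
  unfold prBox
  rcases zmodtwo (x * y + c1 * x + c2 * y + c3) with h | h <;> rw [h] <;>
    simp [zone, zone'] <;> norm_num
lemma prP3 (c1 c2 c3 x y : ZMod 2) :
    prBox c1 c2 c3 1 1 x y = prBox c1 c2 c3 0 0 x y := by
  unfold prBox; rw [ztwo]; norm_num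
lemma prP4 (c1 c2 c3 x y : ZMod 2) :
    prBox c1 c2 c3 1 0 x y = prBox c1 c2 c3 0 1 x y := by
  unfold prBox; norm_num

set_option maxHeartbeats 4000000 in
lemma mainCase (q : ZMod 2 → ZMod 2 → ZMod 2 → ZMod 2 → ℝ) (hq : IsNSBox q)
    (c1 c2 c3 : ZMod 2) (v : ℝ) (hv0 : 0 ≤ v)
    (P : ZMod 2 → ZMod 2 → ℝ) (Af Bf : ZMod 2 → ℝ)
    (hP : ∀ x y, P x y = q 0 0 x y - v * prBox c1 c2 c3 0 0 x y)
    (hA : ∀ x, Af x = (q 0 0 x 0 + q 0 1 x 0) - v / 2)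
    (hB : ∀ y, Bf y = (q 0 0 0 y + q 1 0 0 y) - v / 2)
    (hr : ∀ a b x y, v * prBox c1 c2 c3 a b x y ≤ q a b x y)
    (ch1 : P 0 0 + P 0 1 + P 1 0 - P 1 1 ≤ Af 0 + Bf 0)
    (ch2 : Af 0 + Bf 0 - (1 - v) ≤ P 0 0 + P 0 1 + P 1 0 - P 1 1)
    (ch3 : P 0 0 + P 0 1 - P 1 0 + P 1 1 ≤ Af 0 + Bf 1)
    (ch4 : Af 0 + Bf 1 - (1 - v) ≤ P 0 0 + P 0 1 - P 1 0 + P 1 1)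
    (ch5 : P 0 0 - P 0 1 + P 1 0 + P 1 1 ≤ Af 1 + Bf 0)
    (ch6 : Af 1 + Bf 0 - (1 - v) ≤ P 0 0 - P 0 1 + P 1 0 + P 1 1)
    (ch7 : -P 0 0 + P 0 1 + P 1 0 + P 1 1 ≤ Af 1 + Bf 1)
    (ch8 : Af 1 + Bf 1 - (1 - v) ≤ -P 0 0 + P 0 1 + P 1 0 + P 1 1) :
    ∃ (c : (ZMod 2 → ZMod 2) × (ZMod 2 → ZMod 2) → ℝ)
      (d : ZMod 2 × ZMod 2 × ZMod 2 → ℝ),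
      (∀ fg, 0 ≤ c fg) ∧ (∀ t, 0 ≤ d t) ∧
      (∑ fg : (ZMod 2 → ZMod 2) × (ZMod 2 → ZMod 2), c fg) +
        (∑ t : ZMod 2 × ZMod 2 × ZMod 2, d t) = 1 ∧
      ∀ a b x y, q a b x y =
        (∑ fg : (ZMod 2 → ZMod 2) × (ZMod 2 → ZMod 2),
          c fg * detBox fg.1 fg.2 a b x y) +
        (∑ t : ZMod 2 × ZMod 2 × ZMod 2,
          d t * prBox t.1 t.2.1 t.2.2 a b x y) := by
  have hnorm : ∀ x y : ZMod 2, q 0 0 x y + q 0 1 x y + q 1 0 x y + q 1 1 x y = 1 := by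
    intro x y; have h := hq.2.1 x y; simp only [sumZ] at h; linarith
  have hAm : ∀ x y : ZMod 2, q 0 0 x y + q 0 1 x y = q 0 0 x 0 + q 0 1 x 0 := by
    intro x y; have h := hq.2.2.1 0 x y 0; simp only [sumZ] at h; linarith
  have hBm : ∀ x y : ZMod 2, q 0 0 x y + q 1 0 x y = q 0 0 0 y + q 1 0 0 y := by
    intro x y; have h := hq.2.2.2 0 x 0 y; simp only [sumZ] at h; linarith
  have p1v : ∀ x y, v * prBox c1 c2 c3 0 0 x y + v * prBox c1 c2 c3 0 1 x y = v * (1/2) := by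
    intro x y; rw [← mul_add, prP1]
  have p2v : ∀ x y, v * prBox c1 c2 c3 0 0 x y + v * prBox c1 c2 c3 1 0 x y = v * (1/2) := by
    intro x y; rw [← mul_add, prP2]
  have p3v : ∀ x y, v * prBox c1 c2 c3 1 1 x y = v * prBox c1 c2 c3 0 0 x y := by
    intro x y; rw [prP3]
  have p4v : ∀ x y, v * prBox c1 c2 c3 1 0 x y = v * prBox c1 c2 c3 0 1 x y := by
    intro x y; rw [prP4]
  have h1 : ∀ x y, 0 ≤ P x y := by
    intro x y; rw [hP]; linarith [hr 0 0 x y]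
  have h2 : ∀ x y, P x y ≤ Af x := by
    intro x y; rw [hP, hA]
    linarith [hAm x y, p1v x y, hr 0 1 x y]
  have h3 : ∀ x y, P x y ≤ Bf y := by
    intro x y; rw [hP, hB]
    linarith [hBm x y, p2v x y, hr 1 0 x y]
  have h4 : ∀ x y, Af x + Bf y - (1 - v) ≤ P x y := by
    intro x y; rw [hP, hA, hB]
    linarith [hAm x y, hBm x y, hnorm x y, p1v x y, p2v x y, p3v x y, p4v x y, hr 1 1 x y]
  obtain ⟨c, hc0, hcT, hcP, hcA, hcB⟩ :=
    localDecomp (1 - v) Af Bf P h1 h2 h3 h4 ch1 ch2 ch3 ch4 ch5 ch6 ch7 ch8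
  refine ⟨c, fun t => if t = (c1, c2, c3) then v else 0, hc0, ?_, ?_, ?_⟩
  · intro t; dsimp only; split
    · exact hv0
    · exact le_refl 0
  · rw [hcT, Finset.sum_ite_eq']
    simp
  · intro a b x y
    have hPRs : (∑ t : ZMod 2 × ZMod 2 × ZMod 2,
        (if t = (c1, c2, c3) then v else 0) * prBox t.1 t.2.1 t.2.2 a b x y)
        = v * prBox c1 c2 c3 a b x y := by
      have hcg : ∀ t : ZMod 2 × ZMod 2 × ZMod 2,
          (if t = (c1, c2, c3) then v else 0) * prBox t.1 t.2.1 t.2.2 a b x y =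
          if t = (c1, c2, c3) then v * prBox c1 c2 c3 a b x y else 0 := by
        intro t; split
        · rename_i h; subst h; rfl
        · exact zero_mul _
      rw [Finset.sum_congr rfl fun t _ => hcg t, Finset.sum_ite_eq']
      simp
    rw [hPRs]
    have e2 := hcT
    have e3 := hcP x y
    have e4 := hcA x
    have e5 := hcB y
    have f1 := hP x y
    have f2 := hA x
    have f3 := hB y
    have g1 := hAm x y
    have g2 := hBm x y
    have g3 := hnorm x y
    have p1 := p1v x y
    have p2 := p2v x y
    have p3 := p3v x y
    have p4 := p4v x y
    rcases zmodtwo a with rfl | rfl <;> rcases zmodtwo b with rfl | rfl <;>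
      rcases zmodtwo x with rfl | rfl <;> rcases zmodtwo y with rfl | rfl <;>
      rw [sumPair] at e2 e3 e4 e5 ⊢ <;>
      simp only [eF0, eF1] at e3 e4 e5 ⊢ <;>
      simp [detBox, eF0, eF1, zone, zone'] at e3 e4 e5 ⊢ <;>
      linarith


set_option maxHeartbeats 4000000

/-- Every two-party binary non-signaling box is a convex combination of the 16
local deterministic boxes and the 8 PR-type boxes. -/
theorem nsBox_convex_decomposition
    (q : ZMod 2 → ZMod 2 → ZMod 2 → ZMod 2 → ℝ) (hq : IsNSBox q) :
    ∃ (c : (ZMod 2 → ZMod 2) × (ZMod 2 → ZMod 2) → ℝ)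
      (d : ZMod 2 × ZMod 2 × ZMod 2 → ℝ),
      (∀ fg, 0 ≤ c fg) ∧ (∀ t, 0 ≤ d t) ∧
      (∑ fg : (ZMod 2 → ZMod 2) × (ZMod 2 → ZMod 2), c fg) +
        (∑ t : ZMod 2 × ZMod 2 × ZMod 2, d t) = 1 ∧
      ∀ a b x y, q a b x y =
        (∑ fg : (ZMod 2 → ZMod 2) × (ZMod 2 → ZMod 2),
          c fg * detBox fg.1 fg.2 a b x y) +
        (∑ t : ZMod 2 × ZMod 2 × ZMod 2,
          d t * prBox t.1 t.2.1 t.2.2 a b x y) := by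
  have hnorm : ∀ x y : ZMod 2, q 0 0 x y + q 0 1 x y + q 1 0 x y + q 1 1 x y = 1 := by
    intro x y; have h := hq.2.1 x y; simp only [sumZ] at h; linarith
  have hAm : ∀ x y : ZMod 2, q 0 0 x y + q 0 1 x y = q 0 0 x 0 + q 0 1 x 0 := by
    intro x y; have h := hq.2.2.1 0 x y 0; simp only [sumZ] at h; linarith
  have hBm : ∀ x y : ZMod 2, q 0 0 x y + q 1 0 x y = q 0 0 0 y + q 1 0 0 y := by
    intro x y; have h := hq.2.2.2 0 x 0 y; simp only [sumZ] at h; linarith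
  have nn00 := hnorm 0 0
  have am00 := hAm 0 0
  have bm00 := hBm 0 0
  have nn01 := hnorm 0 1
  have am01 := hAm 0 1
  have bm01 := hBm 0 1
  have nn10 := hnorm 1 0
  have am10 := hAm 1 0
  have bm10 := hBm 1 0
  have nn11 := hnorm 1 1
  have am11 := hAm 1 1
  have bm11 := hBm 1 1
  have ps0000 := hq.1 0 0 0 0
  have ps0001 := hq.1 0 0 0 1
  have ps0010 := hq.1 0 0 1 0
  have ps0011 := hq.1 0 0 1 1
  have ps0100 := hq.1 0 1 0 0
  have ps0101 := hq.1 0 1 0 1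
  have ps0110 := hq.1 0 1 1 0
  have ps0111 := hq.1 0 1 1 1
  have ps1000 := hq.1 1 0 0 0
  have ps1001 := hq.1 1 0 0 1
  have ps1010 := hq.1 1 0 1 0
  have ps1011 := hq.1 1 0 1 1
  have ps1100 := hq.1 1 1 0 0
  have ps1101 := hq.1 1 1 0 1
  have ps1110 := hq.1 1 1 1 0
  have ps1111 := hq.1 1 1 1 1
  rcases lt_or_ge ((q 0 0 0 0 + q 0 1 0 0) + (q 0 0 0 0 + q 1 0 0 0)) (q 0 0 0 0 + q 0 0 0 1 + q 0 0 1 0 - q 0 0 1 1) with hv | hn1u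
  · exact mainCase q hq 0 0 0
      (2 * ((q 0 0 0 0 + q 0 0 0 1 + q 0 0 1 0 - q 0 0 1 1) - ((q 0 0 0 0 + q 0 1 0 0) + (q 0 0 0 0 + q 1 0 0 0))))
      (by linarith)
      (fun x y => q 0 0 x y - (2 * ((q 0 0 0 0 + q 0 0 0 1 + q 0 0 1 0 - q 0 0 1 1) - ((q 0 0 0 0 + q 0 1 0 0) + (q 0 0 0 0 + q 1 0 0 0)))) * prBox 0 0 0 0 0 x y)
      (fun x => q 0 0 x 0 + q 0 1 x 0 - (2 * ((q 0 0 0 0 + q 0 0 0 1 + q 0 0 1 0 - q 0 0 1 1) - ((q 0 0 0 0 + q 0 1 0 0) + (q 0 0 0 0 + q 1 0 0 0)))) / 2)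
      (fun y => q 0 0 0 y + q 1 0 0 y - (2 * ((q 0 0 0 0 + q 0 0 0 1 + q 0 0 1 0 - q 0 0 1 1) - ((q 0 0 0 0 + q 0 1 0 0) + (q 0 0 0 0 + q 1 0 0 0)))) / 2)
      (fun _ _ => rfl) (fun _ => rfl) (fun _ => rfl)
      (by
        intro a b x y
        rcases zmodtwo a with rfl | rfl <;> rcases zmodtwo b with rfl | rfl <;>
          rcases zmodtwo x with rfl | rfl <;> rcases zmodtwo y with rfl | rfl <;>
          simp [prBox, zone, zone', ztwo] <;> linarith)
      (by
            simp [prBox, zone, zone', ztwo]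
            linarith)
      (by
            simp [prBox, zone, zone', ztwo]
            linarith)
      (by
            simp [prBox, zone, zone', ztwo]
            linarith)
      (by
            simp [prBox, zone, zone', ztwo]
            linarith)
      (by
            simp [prBox, zone, zone', ztwo]
            linarith)
      (by
            simp [prBox, zone, zone', ztwo]
            linarith)
      (by
            simp [prBox, zone, zone', ztwo]
            linarith)
      (by
            simp [prBox, zone, zone', ztwo]
            linarith)
  rcases lt_or_ge (q 0 0 0 0 + q 0 0 0 1 + q 0 0 1 0 - q 0 0 1 1) (((q 0 0 0 0 + q 0 1 0 0) + (q 0 0 0 0 + q 1 0 0 0)) - 1) with hv | hn1l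
  · exact mainCase q hq 0 0 1
      (2 * ((((q 0 0 0 0 + q 0 1 0 0) + (q 0 0 0 0 + q 1 0 0 0)) - 1) - (q 0 0 0 0 + q 0 0 0 1 + q 0 0 1 0 - q 0 0 1 1)))
      (by linarith)
      (fun x y => q 0 0 x y - (2 * ((((q 0 0 0 0 + q 0 1 0 0) + (q 0 0 0 0 + q 1 0 0 0)) - 1) - (q 0 0 0 0 + q 0 0 0 1 + q 0 0 1 0 - q 0 0 1 1))) * prBox 0 0 1 0 0 x y)
      (fun x => q 0 0 x 0 + q 0 1 x 0 - (2 * ((((q 0 0 0 0 + q 0 1 0 0) + (q 0 0 0 0 + q 1 0 0 0)) - 1) - (q 0 0 0 0 + q 0 0 0 1 + q 0 0 1 0 - q 0 0 1 1))) / 2)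
      (fun y => q 0 0 0 y + q 1 0 0 y - (2 * ((((q 0 0 0 0 + q 0 1 0 0) + (q 0 0 0 0 + q 1 0 0 0)) - 1) - (q 0 0 0 0 + q 0 0 0 1 + q 0 0 1 0 - q 0 0 1 1))) / 2)
      (fun _ _ => rfl) (fun _ => rfl) (fun _ => rfl)
      (by
        intro a b x y
        rcases zmodtwo a with rfl | rfl <;> rcases zmodtwo b with rfl | rfl <;>
          rcases zmodtwo x with rfl | rfl <;> rcases zmodtwo y with rfl | rfl <;>
          simp [prBox, zone, zone', ztwo] <;> linarith)
      (by
            simp [prBox, zone, zone', ztwo]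
            linarith)
      (by
            simp [prBox, zone, zone', ztwo]
            linarith)
      (by
            simp [prBox, zone, zone', ztwo]
            linarith)
      (by
            simp [prBox, zone, zone', ztwo]
            linarith)
      (by
            simp [prBox, zone, zone', ztwo]
            linarith)
      (by
            simp [prBox, zone, zone', ztwo]
            linarith)
      (by
            simp [prBox, zone, zone', ztwo]
            linarith)
      (by
            simp [prBox, zone, zone', ztwo]
            linarith)
  rcases lt_or_ge ((q 0 0 0 0 + q 0 1 0 0) + (q 0 0 0 1 + q 1 0 0 1)) (q 0 0 0 0 + q 0 0 0 1 - q 0 0 1 0 + q 0 0 1 1) with hv | hn2u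
  · exact mainCase q hq 1 0 0
      (2 * ((q 0 0 0 0 + q 0 0 0 1 - q 0 0 1 0 + q 0 0 1 1) - ((q 0 0 0 0 + q 0 1 0 0) + (q 0 0 0 1 + q 1 0 0 1))))
      (by linarith)
      (fun x y => q 0 0 x y - (2 * ((q 0 0 0 0 + q 0 0 0 1 - q 0 0 1 0 + q 0 0 1 1) - ((q 0 0 0 0 + q 0 1 0 0) + (q 0 0 0 1 + q 1 0 0 1)))) * prBox 1 0 0 0 0 x y)
      (fun x => q 0 0 x 0 + q 0 1 x 0 - (2 * ((q 0 0 0 0 + q 0 0 0 1 - q 0 0 1 0 + q 0 0 1 1) - ((q 0 0 0 0 + q 0 1 0 0) + (q 0 0 0 1 + q 1 0 0 1)))) / 2)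
      (fun y => q 0 0 0 y + q 1 0 0 y - (2 * ((q 0 0 0 0 + q 0 0 0 1 - q 0 0 1 0 + q 0 0 1 1) - ((q 0 0 0 0 + q 0 1 0 0) + (q 0 0 0 1 + q 1 0 0 1)))) / 2)
      (fun _ _ => rfl) (fun _ => rfl) (fun _ => rfl)
      (by
        intro a b x y
        rcases zmodtwo a with rfl | rfl <;> rcases zmodtwo b with rfl | rfl <;>
          rcases zmodtwo x with rfl | rfl <;> rcases zmodtwo y with rfl | rfl <;>
          simp [prBox, zone, zone', ztwo] <;> linarith)
      (by
            simp [prBox, zone, zone', ztwo]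
            linarith)
      (by
            simp [prBox, zone, zone', ztwo]
            linarith)
      (by
            simp [prBox, zone, zone', ztwo]
            linarith)
      (by
            simp [prBox, zone, zone', ztwo]
            linarith)
      (by
            simp [prBox, zone, zone', ztwo]
            linarith)
      (by
            simp [prBox, zone, zone', ztwo]
            linarith)
      (by
            simp [prBox, zone, zone', ztwo]
            linarith)
      (by
            simp [prBox, zone, zone', ztwo]
            linarith)
  rcases lt_or_ge (q 0 0 0 0 + q 0 0 0 1 - q 0 0 1 0 + q 0 0 1 1) (((q 0 0 0 0 + q 0 1 0 0) + (q 0 0 0 1 + q 1 0 0 1)) - 1) with hv | hn2l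
  · exact mainCase q hq 1 0 1
      (2 * ((((q 0 0 0 0 + q 0 1 0 0) + (q 0 0 0 1 + q 1 0 0 1)) - 1) - (q 0 0 0 0 + q 0 0 0 1 - q 0 0 1 0 + q 0 0 1 1)))
      (by linarith)
      (fun x y => q 0 0 x y - (2 * ((((q 0 0 0 0 + q 0 1 0 0) + (q 0 0 0 1 + q 1 0 0 1)) - 1) - (q 0 0 0 0 + q 0 0 0 1 - q 0 0 1 0 + q 0 0 1 1))) * prBox 1 0 1 0 0 x y)
      (fun x => q 0 0 x 0 + q 0 1 x 0 - (2 * ((((q 0 0 0 0 + q 0 1 0 0) + (q 0 0 0 1 + q 1 0 0 1)) - 1) - (q 0 0 0 0 + q 0 0 0 1 - q 0 0 1 0 + q 0 0 1 1))) / 2)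
      (fun y => q 0 0 0 y + q 1 0 0 y - (2 * ((((q 0 0 0 0 + q 0 1 0 0) + (q 0 0 0 1 + q 1 0 0 1)) - 1) - (q 0 0 0 0 + q 0 0 0 1 - q 0 0 1 0 + q 0 0 1 1))) / 2)
      (fun _ _ => rfl) (fun _ => rfl) (fun _ => rfl)
      (by
        intro a b x y
        rcases zmodtwo a with rfl | rfl <;> rcases zmodtwo b with rfl | rfl <;>
          rcases zmodtwo x with rfl | rfl <;> rcases zmodtwo y with rfl | rfl <;>
          simp [prBox, zone, zone', ztwo] <;> linarith)
      (by
            simp [prBox, zone, zone', ztwo]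
            linarith)
      (by
            simp [prBox, zone, zone', ztwo]
            linarith)
      (by
            simp [prBox, zone, zone', ztwo]
            linarith)
      (by
            simp [prBox, zone, zone', ztwo]
            linarith)
      (by
            simp [prBox, zone, zone', ztwo]
            linarith)
      (by
            simp [prBox, zone, zone', ztwo]
            linarith)
      (by
            simp [prBox, zone, zone', ztwo]
            linarith)
      (by
            simp [prBox, zone, zone', ztwo]
            linarith)
  rcases lt_or_ge ((q 0 0 1 0 + q 0 1 1 0) + (q 0 0 0 0 + q 1 0 0 0)) (q 0 0 0 0 - q 0 0 0 1 + q 0 0 1 0 + q 0 0 1 1) with hv | hn3u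
  · exact mainCase q hq 0 1 0
      (2 * ((q 0 0 0 0 - q 0 0 0 1 + q 0 0 1 0 + q 0 0 1 1) - ((q 0 0 1 0 + q 0 1 1 0) + (q 0 0 0 0 + q 1 0 0 0))))
      (by linarith)
      (fun x y => q 0 0 x y - (2 * ((q 0 0 0 0 - q 0 0 0 1 + q 0 0 1 0 + q 0 0 1 1) - ((q 0 0 1 0 + q 0 1 1 0) + (q 0 0 0 0 + q 1 0 0 0)))) * prBox 0 1 0 0 0 x y)
      (fun x => q 0 0 x 0 + q 0 1 x 0 - (2 * ((q 0 0 0 0 - q 0 0 0 1 + q 0 0 1 0 + q 0 0 1 1) - ((q 0 0 1 0 + q 0 1 1 0) + (q 0 0 0 0 + q 1 0 0 0)))) / 2)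
      (fun y => q 0 0 0 y + q 1 0 0 y - (2 * ((q 0 0 0 0 - q 0 0 0 1 + q 0 0 1 0 + q 0 0 1 1) - ((q 0 0 1 0 + q 0 1 1 0) + (q 0 0 0 0 + q 1 0 0 0)))) / 2)
      (fun _ _ => rfl) (fun _ => rfl) (fun _ => rfl)
      (by
        intro a b x y
        rcases zmodtwo a with rfl | rfl <;> rcases zmodtwo b with rfl | rfl <;>
          rcases zmodtwo x with rfl | rfl <;> rcases zmodtwo y with rfl | rfl <;>
          simp [prBox, zone, zone', ztwo] <;> linarith)
      (by
            simp [prBox, zone, zone', ztwo]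
            linarith)
      (by
            simp [prBox, zone, zone', ztwo]
            linarith)
      (by
            simp [prBox, zone, zone', ztwo]
            linarith)
      (by
            simp [prBox, zone, zone', ztwo]
            linarith)
      (by
            simp [prBox, zone, zone', ztwo]
            linarith)
      (by
            simp [prBox, zone, zone', ztwo]
            linarith)
      (by
            simp [prBox, zone, zone', ztwo]
            linarith)
      (by
            simp [prBox, zone, zone', ztwo]
            linarith)
  rcases lt_or_ge (q 0 0 0 0 - q 0 0 0 1 + q 0 0 1 0 + q 0 0 1 1) (((q 0 0 1 0 + q 0 1 1 0) + (q 0 0 0 0 + q 1 0 0 0)) - 1) with hv | hn3l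
  · exact mainCase q hq 0 1 1
      (2 * ((((q 0 0 1 0 + q 0 1 1 0) + (q 0 0 0 0 + q 1 0 0 0)) - 1) - (q 0 0 0 0 - q 0 0 0 1 + q 0 0 1 0 + q 0 0 1 1)))
      (by linarith)
      (fun x y => q 0 0 x y - (2 * ((((q 0 0 1 0 + q 0 1 1 0) + (q 0 0 0 0 + q 1 0 0 0)) - 1) - (q 0 0 0 0 - q 0 0 0 1 + q 0 0 1 0 + q 0 0 1 1))) * prBox 0 1 1 0 0 x y)
      (fun x => q 0 0 x 0 + q 0 1 x 0 - (2 * ((((q 0 0 1 0 + q 0 1 1 0) + (q 0 0 0 0 + q 1 0 0 0)) - 1) - (q 0 0 0 0 - q 0 0 0 1 + q 0 0 1 0 + q 0 0 1 1))) / 2)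
      (fun y => q 0 0 0 y + q 1 0 0 y - (2 * ((((q 0 0 1 0 + q 0 1 1 0) + (q 0 0 0 0 + q 1 0 0 0)) - 1) - (q 0 0 0 0 - q 0 0 0 1 + q 0 0 1 0 + q 0 0 1 1))) / 2)
      (fun _ _ => rfl) (fun _ => rfl) (fun _ => rfl)
      (by
        intro a b x y
        rcases zmodtwo a with rfl | rfl <;> rcases zmodtwo b with rfl | rfl <;>
          rcases zmodtwo x with rfl | rfl <;> rcases zmodtwo y with rfl | rfl <;>
          simp [prBox, zone, zone', ztwo] <;> linarith)
      (by
            simp [prBox, zone, zone', ztwo]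
            linarith)
      (by
            simp [prBox, zone, zone', ztwo]
            linarith)
      (by
            simp [prBox, zone, zone', ztwo]
            linarith)
      (by
            simp [prBox, zone, zone', ztwo]
            linarith)
      (by
            simp [prBox, zone, zone', ztwo]
            linarith)
      (by
            simp [prBox, zone, zone', ztwo]
            linarith)
      (by
            simp [prBox, zone, zone', ztwo]
            linarith)
      (by
            simp [prBox, zone, zone', ztwo]
            linarith)
  rcases lt_or_ge ((q 0 0 1 0 + q 0 1 1 0) + (q 0 0 0 1 + q 1 0 0 1)) (-q 0 0 0 0 + q 0 0 0 1 + q 0 0 1 0 + q 0 0 1 1) with hv | hn4u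
  · exact mainCase q hq 1 1 1
      (2 * ((-q 0 0 0 0 + q 0 0 0 1 + q 0 0 1 0 + q 0 0 1 1) - ((q 0 0 1 0 + q 0 1 1 0) + (q 0 0 0 1 + q 1 0 0 1))))
      (by linarith)
      (fun x y => q 0 0 x y - (2 * ((-q 0 0 0 0 + q 0 0 0 1 + q 0 0 1 0 + q 0 0 1 1) - ((q 0 0 1 0 + q 0 1 1 0) + (q 0 0 0 1 + q 1 0 0 1)))) * prBox 1 1 1 0 0 x y)
      (fun x => q 0 0 x 0 + q 0 1 x 0 - (2 * ((-q 0 0 0 0 + q 0 0 0 1 + q 0 0 1 0 + q 0 0 1 1) - ((q 0 0 1 0 + q 0 1 1 0) + (q 0 0 0 1 + q 1 0 0 1)))) / 2)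
      (fun y => q 0 0 0 y + q 1 0 0 y - (2 * ((-q 0 0 0 0 + q 0 0 0 1 + q 0 0 1 0 + q 0 0 1 1) - ((q 0 0 1 0 + q 0 1 1 0) + (q 0 0 0 1 + q 1 0 0 1)))) / 2)
      (fun _ _ => rfl) (fun _ => rfl) (fun _ => rfl)
      (by
        intro a b x y
        rcases zmodtwo a with rfl | rfl <;> rcases zmodtwo b with rfl | rfl <;>
          rcases zmodtwo x with rfl | rfl <;> rcases zmodtwo y with rfl | rfl <;>
          simp [prBox, zone, zone', ztwo] <;> linarith)
      (by
            simp [prBox, zone, zone', ztwo]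
            linarith)
      (by
            simp [prBox, zone, zone', ztwo]
            linarith)
      (by
            simp [prBox, zone, zone', ztwo]
            linarith)
      (by
            simp [prBox, zone, zone', ztwo]
            linarith)
      (by
            simp [prBox, zone, zone', ztwo]
            linarith)
      (by
            simp [prBox, zone, zone', ztwo]
            linarith)
      (by
            simp [prBox, zone, zone', ztwo]
            linarith)
      (by
            simp [prBox, zone, zone', ztwo]
            linarith)
  rcases lt_or_ge (-q 0 0 0 0 + q 0 0 0 1 + q 0 0 1 0 + q 0 0 1 1) (((q 0 0 1 0 + q 0 1 1 0) + (q 0 0 0 1 + q 1 0 0 1)) - 1) with hv | hn4l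
  · exact mainCase q hq 1 1 0
      (2 * ((((q 0 0 1 0 + q 0 1 1 0) + (q 0 0 0 1 + q 1 0 0 1)) - 1) - (-q 0 0 0 0 + q 0 0 0 1 + q 0 0 1 0 + q 0 0 1 1)))
      (by linarith)
      (fun x y => q 0 0 x y - (2 * ((((q 0 0 1 0 + q 0 1 1 0) + (q 0 0 0 1 + q 1 0 0 1)) - 1) - (-q 0 0 0 0 + q 0 0 0 1 + q 0 0 1 0 + q 0 0 1 1))) * prBox 1 1 0 0 0 x y)
      (fun x => q 0 0 x 0 + q 0 1 x 0 - (2 * ((((q 0 0 1 0 + q 0 1 1 0) + (q 0 0 0 1 + q 1 0 0 1)) - 1) - (-q 0 0 0 0 + q 0 0 0 1 + q 0 0 1 0 + q 0 0 1 1))) / 2)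
      (fun y => q 0 0 0 y + q 1 0 0 y - (2 * ((((q 0 0 1 0 + q 0 1 1 0) + (q 0 0 0 1 + q 1 0 0 1)) - 1) - (-q 0 0 0 0 + q 0 0 0 1 + q 0 0 1 0 + q 0 0 1 1))) / 2)
      (fun _ _ => rfl) (fun _ => rfl) (fun _ => rfl)
      (by
        intro a b x y
        rcases zmodtwo a with rfl | rfl <;> rcases zmodtwo b with rfl | rfl <;>
          rcases zmodtwo x with rfl | rfl <;> rcases zmodtwo y with rfl | rfl <;>
          simp [prBox, zone, zone', ztwo] <;> linarith)
      (by
            simp [prBox, zone, zone', ztwo]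
            linarith)
      (by
            simp [prBox, zone, zone', ztwo]
            linarith)
      (by
            simp [prBox, zone, zone', ztwo]
            linarith)
      (by
            simp [prBox, zone, zone', ztwo]
            linarith)
      (by
            simp [prBox, zone, zone', ztwo]
            linarith)
      (by
            simp [prBox, zone, zone', ztwo]
            linarith)
      (by
            simp [prBox, zone, zone', ztwo]
            linarith)
      (by
            simp [prBox, zone, zone', ztwo]
            linarith)
  exact mainCase q hq 0 0 0
    ((0:ℝ))
    (by linarith)
    (fun x y => q 0 0 x y - ((0:ℝ)) * prBox 0 0 0 0 0 x y)
    (fun x => q 0 0 x 0 + q 0 1 x 0 - ((0:ℝ)) / 2)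
    (fun y => q 0 0 0 y + q 1 0 0 y - ((0:ℝ)) / 2)
    (fun _ _ => rfl) (fun _ => rfl) (fun _ => rfl)
    (by
      intro a b x y
      rcases zmodtwo a with rfl | rfl <;> rcases zmodtwo b with rfl | rfl <;>
        rcases zmodtwo x with rfl | rfl <;> rcases zmodtwo y with rfl | rfl <;>
        simp [prBox, zone, zone', ztwo] <;> linarith)
    (by
          simp [prBox, zone, zone', ztwo]
          linarith)
    (by
          simp [prBox, zone, zone', ztwo]
          linarith)
    (by
          simp [prBox, zone, zone', ztwo]
          linarith)
    (by
          simp [prBox, zone, zone', ztwo]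
          linarith)
    (by
          simp [prBox, zone, zone', ztwo]
          linarith)
    (by
          simp [prBox, zone, zone', ztwo]
          linarith)
    (by
          simp [prBox, zone, zone', ztwo]
          linarith)
    (by
          simp [prBox, zone, zone', ztwo]
          linarith)
end

section
/- The five-player cycle graph game admits a perfect quantum strategy: there exist a nonzero vector ψ in the 5-qubit state space ((Fin 5 → Fin 2) → ℂ) and, for each i ∈ ZMod 5, Hermitian 2×2 complex matrices A_i and B_i with A_i² = B_i² = I (the observables measured by player i on input 1 and on input 0, respectively), such that the Kronecker product A_1 ⊗ A_2 ⊗ A_3 ⊗ A_4 ⊗ A_5 sends ψ to −ψ, and for each i ∈ ZMod 5 the Kronecker product placing A_i at position i, B_{i−1} and B_{i+1} at positions i−1 and i+1, and the identity matrix at the two remaining positions, sends ψ to ψ. (Interpreting a ±1 measurement outcome as an output bit, such eigenvalue relations mean the players' outputs satisfy Σ a_j ≡ 1 (mod 2) with certainty on question Q_a and a_{i-1} + a_i + a_{i+1} ≡ 0 (mod 2) with certainty on each question Q_i.) -/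
/-- Action of the 5-fold Kronecker product `M 0 ⊗ M 1 ⊗ M 2 ⊗ M 3 ⊗ M 4` of
`2 × 2` complex matrices on the 5-qubit state space `(Fin 5 → Fin 2) → ℂ`. -/
noncomputable def kronAct (M : Fin 5 → Matrix (Fin 2) (Fin 2) ℂ)
    (ψ : (Fin 5 → Fin 2) → ℂ) : (Fin 5 → Fin 2) → ℂ :=
  fun s => ∑ t : Fin 5 → Fin 2, (∏ j : Fin 5, M j (s j) (t j)) * ψ t

/-- Integer version of `kronAct`. -/
def kronActZ (M : Fin 5 → Matrix (Fin 2) (Fin 2) ℤ)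
    (f : (Fin 5 → Fin 2) → ℤ) : (Fin 5 → Fin 2) → ℤ :=
  fun s => ∑ t : Fin 5 → Fin 2, (∏ j : Fin 5, M j (s j) (t j)) * f t

def Xz : Matrix (Fin 2) (Fin 2) ℤ := !![0, 1; 1, 0]
def Zz : Matrix (Fin 2) (Fin 2) ℤ := !![1, 0; 0, -1]

/-- The 5-cycle cluster state, integer valued. -/
def psiZ : (Fin 5 → Fin 2) → ℤ :=
  fun s => (-1) ^ ((s 0).val * (s 1).val + (s 1).val * (s 2).val +
    (s 2).val * (s 3).val + (s 3).val * (s 4).val + (s 4).val * (s 0).val)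

def Mz (i : ZMod 5) : Fin 5 → Matrix (Fin 2) (Fin 2) ℤ := fun j =>
  if ((j : ℕ) : ZMod 5) = i then Xz
  else if ((j : ℕ) : ZMod 5) = i - 1 then Zz
  else if ((j : ℕ) : ZMod 5) = i + 1 then Zz
  else 1

lemma kronAct_cast (M : Fin 5 → Matrix (Fin 2) (Fin 2) ℤ)
    (f : (Fin 5 → Fin 2) → ℤ) :
    kronAct (fun j => (M j).map (Int.cast : ℤ → ℂ)) (fun s => ((f s : ℤ) : ℂ))
      = fun s => ((kronActZ M f s : ℤ) : ℂ) := by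
  funext s
  simp [kronAct, kronActZ, Matrix.map_apply]

lemma zfact_a : ∀ s, kronActZ (fun _ => Xz) psiZ s = -psiZ s := by decide

lemma zfact_i : ∀ (i : ZMod 5) s, kronActZ (Mz i) psiZ s = psiZ s := by decide

/-- The five-player cycle graph game admits a perfect quantum strategy: there
are a nonzero 5-qubit state `ψ` and, for each player `i : ZMod 5`, Hermitian
`±1`-observables `A i` (measured on input 1) and `B i` (measured on input 0)
such that `A 1 ⊗ A 2 ⊗ A 3 ⊗ A 4 ⊗ A 5` sends `ψ` to `-ψ` (question `Q_a`),
and for each `i` the operator with `A i` at position `i`, `B (i-1)` and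
`B (i+1)` at positions `i-1` and `i+1`, and the identity elsewhere, fixes `ψ`
(question `Q_i`). -/
theorem fiveCycle_perfect_quantum_strategy :
    ∃ (ψ : (Fin 5 → Fin 2) → ℂ) (A B : ZMod 5 → Matrix (Fin 2) (Fin 2) ℂ),
      ψ ≠ 0 ∧
      (∀ i : ZMod 5, (A i).IsHermitian ∧ (B i).IsHermitian ∧
        (A i) ^ 2 = 1 ∧ (B i) ^ 2 = 1) ∧
      kronAct (fun j => A ((j : ℕ) : ZMod 5)) ψ = -ψ ∧
      (∀ i : ZMod 5,
        kronAct (fun j =>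
          if ((j : ℕ) : ZMod 5) = i then A i
          else if ((j : ℕ) : ZMod 5) = i - 1 then B (i - 1)
          else if ((j : ℕ) : ZMod 5) = i + 1 then B (i + 1)
          else 1) ψ = ψ) := by
  refine ⟨fun s => ((psiZ s : ℤ) : ℂ),
    fun _ => Xz.map (Int.cast : ℤ → ℂ), fun _ => Zz.map (Int.cast : ℤ → ℂ),
    ?_, ?_, ?_, ?_⟩
  · intro h
    have := congrFun h (fun _ => 0)
    simp [psiZ] at this
  · intro i
    refine ⟨?_, ?_, ?_, ?_⟩
    · ext a b
      fin_cases a <;> fin_cases b <;>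
        simp [Xz, Matrix.conjTranspose_apply, Matrix.map_apply]
    · ext a b
      fin_cases a <;> fin_cases b <;>
        simp [Zz, Matrix.conjTranspose_apply, Matrix.map_apply]
    · show (Xz.map (Int.cast : ℤ → ℂ)) ^ 2 = 1
      rw [pow_two,
        show (Int.cast : ℤ → ℂ) = ⇑(Int.castRingHom ℂ) from rfl,
        ← Matrix.map_mul, show Xz * Xz = 1 from by decide]
      simp [Matrix.map_one]
    · show (Zz.map (Int.cast : ℤ → ℂ)) ^ 2 = 1
      rw [pow_two,
        show (Int.cast : ℤ → ℂ) = ⇑(Int.castRingHom ℂ) from rfl,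
        ← Matrix.map_mul, show Zz * Zz = 1 from by decide]
      simp [Matrix.map_one]
  · rw [show (fun (_ : Fin 5) => Xz.map (Int.cast : ℤ → ℂ)) =
        fun j => ((fun _ : Fin 5 => Xz) j).map (Int.cast : ℤ → ℂ) from rfl,
      kronAct_cast]
    funext s
    rw [zfact_a s]
    simp
  · intro i
    have hM : (fun (j : Fin 5) =>
        if ((j : ℕ) : ZMod 5) = i then Xz.map (Int.cast : ℤ → ℂ)
        else if ((j : ℕ) : ZMod 5) = i - 1 then Zz.map (Int.cast : ℤ → ℂ)
        else if ((j : ℕ) : ZMod 5) = i + 1 then Zz.map (Int.cast : ℤ → ℂ)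
        else 1) = fun j => (Mz i j).map (Int.cast : ℤ → ℂ) := by
      funext j
      simp only [Mz]
      split_ifs <;> simp [Matrix.map_one]
    rw [hM, kronAct_cast]
    funext s
    rw [zfact_i i s]
end
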